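/- Let R be a commutative strongly ℤ-graded ring with grading 𝒜. For all k, ℓ ∈ ℤ, the 𝒜 0-linear map R_{≤ℓ} ⊗[𝒜 0] 𝒜 k → R_{≤ℓ+k} induced by multiplication (r ⊗ s ↦ r·s) is bijective. -/

import Mathlib

/-! Strong grading gives `1 = ∑ i, vᵢ uᵢ` with `vᵢ ∈ 𝒜 k` and `uᵢ ∈ 𝒜 (-k)`. Then
`x ↦ ∑ i, x uᵢ ⊗ vᵢ` inverts multiplication: one composite is `x ↦ x ∑ i, vᵢ uᵢ = x`, and the
other sends `r ⊗ s` to `∑ i, r ⊗ (s uᵢ) vᵢ = r ⊗ s`, since `s uᵢ ∈ 𝒜 0` moves across the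
tensor sign. -/

open TensorProduct

/-- A ℤ-graded ring is *strongly graded* if `𝒜 i * 𝒜 j = 𝒜 (i + j)` for all `i j`. -/
def IsStronglyGraded {R : Type*} [Ring R] (𝒜 : ℤ → Submodule ℤ R) : Prop :=
  ∀ i j : ℤ, 𝒜 i * 𝒜 j = 𝒜 (i + j)

variable {R : Type*} [CommRing R] (𝒜 : ℤ → Submodule ℤ R) [GradedRing 𝒜]

/-- `R_{≤k}`, the sum of the homogeneous components of degree at most `k`. -/
def Rle (k : ℤ) : Submodule ℤ R := ⨆ n ≤ k, 𝒜 n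

theorem Rle_mul_Rle (a b : ℤ) : Rle 𝒜 a * Rle 𝒜 b ≤ Rle 𝒜 (a + b) := by
  rw [Rle, Rle, Submodule.iSup_mul]
  refine iSup_le fun n => ?_
  rw [Submodule.iSup_mul]
  refine iSup_le fun hn => ?_
  rw [Submodule.mul_iSup]
  refine iSup_le fun m => ?_
  rw [Submodule.mul_iSup]
  refine iSup_le fun hm => ?_
  refine le_trans (Submodule.mul_le.2 fun x hx y hy => SetLike.mul_mem_graded hx hy) ?_
  exact le_iSup₂_of_le (n + m) (add_le_add hn hm) le_rfl

/-- The homogeneous component `𝒜 n` is a module over the subring `𝒜 0`,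
with the action given by multiplication in `R`. -/
instance gradeLeftModule (n : ℤ) : Module (𝒜 0) (𝒜 n) where
  smul a x := ⟨(a : R) * x, by simpa using SetLike.mul_mem_graded a.2 x.2⟩
  one_smul x := Subtype.ext (one_mul _)
  mul_smul a b x := Subtype.ext (mul_assoc _ _ _)
  smul_zero a := Subtype.ext (mul_zero _)
  smul_add a x y := Subtype.ext (mul_add _ _ _)
  add_smul a b x := Subtype.ext (add_mul _ _ _)
  zero_smul x := Subtype.ext (zero_mul _)

/-- `R_{≤k}` is a module over the subring `𝒜 0`, the action being
multiplication in `R`. -/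
instance RleGradeZeroModule (k : ℤ) : Module (𝒜 0) (Rle 𝒜 k) where
  smul a x := ⟨(a : R) * x, by
    simpa using Rle_mul_Rle 𝒜 0 k (Submodule.mul_mem_mul
      (Submodule.mem_iSup_of_mem 0 (Submodule.mem_iSup_of_mem le_rfl a.2)) x.2)⟩
  one_smul x := Subtype.ext (one_mul _)
  mul_smul a b x := Subtype.ext (mul_assoc _ _ _)
  smul_zero a := Subtype.ext (mul_zero _)
  smul_add a x y := Subtype.ext (mul_add _ _ _)
  add_smul a b x := Subtype.ext (add_mul _ _ _)
  zero_smul x := Subtype.ext (zero_mul _)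


theorem Submodule.exists_fin_sum_mul_eq_of_mem_mul {S A : Type*} [CommSemiring S] [Semiring A]
    [Algebra S A] {P Q : Submodule S A} {x : A} (hx : x ∈ P * Q) :
    ∃ (n : ℕ) (v : Fin n → P) (u : Fin n → Q), ∑ i, (v i : A) * u i = x := by
  refine Submodule.mul_induction_on hx
    (fun p hp q hq => ⟨1, fun _ => ⟨p, hp⟩, fun _ => ⟨q, hq⟩, by simp⟩) ?_
  rintro x y ⟨n, v, u, rfl⟩ ⟨m, v', u', rfl⟩
  exact ⟨n + m, Fin.append v v', Fin.append u u', by simp [Fin.sum_univ_add]⟩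

@[simp] lemma coe_smul_grade (n : ℤ) (a : 𝒜 0) (x : 𝒜 n) :
    ((a • x : 𝒜 n) : R) = a * x := rfl

lemma mul_mem_Rle_of_mem_grade {a b : ℤ} {x y : R} (hx : x ∈ Rle 𝒜 a) (hy : y ∈ 𝒜 b) :
    x * y ∈ Rle 𝒜 (a + b) :=
  Rle_mul_Rle 𝒜 a b <| Submodule.mul_mem_mul hx <|
    Submodule.mem_iSup_of_mem b (Submodule.mem_iSup_of_mem le_rfl hy)

namespace Rle

def mulRight {a b c : ℤ} (habc : a + b = c) (y : 𝒜 b) : Rle 𝒜 a →ₗ[𝒜 0] Rle 𝒜 c where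
  toFun x := ⟨x * y, habc ▸ mul_mem_Rle_of_mem_grade 𝒜 x.2 y.2⟩
  map_add' _ _ := Subtype.ext (add_mul _ _ _)
  map_smul' _ _ := Subtype.ext (mul_assoc _ _ _)

@[simp] lemma coe_mulRight {a b c : ℤ} (habc : a + b = c) (y : 𝒜 b) (x : Rle 𝒜 a) :
    (mulRight 𝒜 habc y x : R) = x * y := rfl

variable {𝒜} {k l : ℤ} {n : ℕ} (v : Fin n → 𝒜 k) (u : Fin n → 𝒜 (-k))

def splitMul : Rle 𝒜 (l + k) →ₗ[𝒜 0] Rle 𝒜 l ⊗[𝒜 0] 𝒜 k :=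
  ∑ i, (TensorProduct.mk (𝒜 0) (Rle 𝒜 l) (𝒜 k)).flip (v i) ∘ₗ
    mulRight 𝒜 (add_neg_cancel_right l k) (u i)

lemma splitMul_apply (x : Rle 𝒜 (l + k)) :
    splitMul v u x = ∑ i, mulRight 𝒜 (add_neg_cancel_right l k) (u i) x ⊗ₜ v i := by
  simp [splitMul]

variable {v u} (hvu : ∑ i, (v i : R) * u i = 1)
  {g : Rle 𝒜 l ⊗[𝒜 0] 𝒜 k →ₗ[𝒜 0] Rle 𝒜 (l + k)}
  (hg : ∀ (r : Rle 𝒜 l) (s : 𝒜 k), (g (r ⊗ₜ s) : R) = r * s)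
include hvu hg

lemma map_splitMul (x : Rle 𝒜 (l + k)) : g (splitMul v u x) = x := by
  apply Subtype.ext
  simp only [splitMul_apply, map_sum, Submodule.coe_sum, hg, coe_mulRight]
  simp_rw [mul_assoc, mul_comm (u _ : R), ← Finset.mul_sum, hvu, mul_one]

lemma splitMul_map (t : Rle 𝒜 l ⊗[𝒜 0] 𝒜 k) : splitMul v u (g t) = t := by
  suffices splitMul v u ∘ₗ g = LinearMap.id from LinearMap.congr_fun this t
  refine TensorProduct.ext' fun r s => ?_
  let a (i : Fin n) : 𝒜 0 := ⟨s * u i, by simpa using SetLike.mul_mem_graded s.2 (u i).2⟩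
  have hmul (i : Fin n) : mulRight 𝒜 (add_neg_cancel_right l k) (u i) (g (r ⊗ₜ s)) = a i • r :=
    Subtype.ext <| show (g (r ⊗ₜ s) : R) * u i = s * u i * r by rw [hg]; ring
  have hsum : ∑ i, a i • v i = s := Subtype.ext <| by
    simp only [Submodule.coe_sum, coe_smul_grade, a]
    simp_rw [mul_assoc, mul_comm (u _ : R), ← Finset.mul_sum, hvu, mul_one]
  simp only [LinearMap.comp_apply, splitMul_apply, hmul, smul_tmul, ← tmul_sum, hsum,
    LinearMap.id_apply]

end Rle

/-- For a commutative strongly ℤ-graded ring, the `𝒜 0`-linear map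
`R_{≤ℓ} ⊗[𝒜 0] 𝒜 k → R_{≤ℓ+k}` induced by multiplication is bijective. -/
theorem Rle_tensor_grade_mul_bijective (h : IsStronglyGraded 𝒜) (k l : ℤ)
    (g : (Rle 𝒜 l ⊗[𝒜 0] 𝒜 k) →ₗ[𝒜 0] Rle 𝒜 (l + k))
    (hg : ∀ (r : Rle 𝒜 l) (s : 𝒜 k), (g (r ⊗ₜ s) : R) = (r : R) * (s : R)) :
    Function.Bijective g := by
  have hone : (1 : R) ∈ 𝒜 k * 𝒜 (-k) := by
    rw [h, add_neg_cancel]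
    exact SetLike.one_mem_graded 𝒜
  obtain ⟨n, v, u, hvu⟩ := Submodule.exists_fin_sum_mul_eq_of_mem_mul hone
  exact Function.bijective_iff_has_inverse.mpr
    ⟨Rle.splitMul v u, Rle.splitMul_map hvu hg, Rle.map_splitMul hvu hg⟩
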